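/- Let v and v' be votings of the nation such that under v, candidate A receives strictly more votes than B in every one of the K regions. Suppose every cell where v' differs from v lies in the union of B_blk pairwise disjoint m_n × m_n noise-concentrated blocks contained in the nation, and set S_c = B_blk·m_n². If S_c < (m_n²/m_r²) · (1/(⌈m_n/m_r⌉ + 1)²) · (N/2), then under v' candidate A wins strictly more than half of the K regions, i.e. regional voting still selects A. -/

import Mathlib

/-- The nation: the set of cells `{0,…,L−1} × {0,…,M−1} ⊆ ℤ²`. -/
noncomputable def nation (L M : ℤ) : Finset (ℤ × ℤ) :=
  Finset.Ico 0 L ×ˢ Finset.Ico 0 M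

/-- The region index of a cell `(x, y)` for the (unshifted) partition into `m × m` squares:
`(⌊x/m⌋, ⌊y/m⌋)`. -/
def regionIdx (m : ℤ) (p : ℤ × ℤ) : ℤ × ℤ :=
  (p.1.fdiv m, p.2.fdiv m)

/-- The `mn × mn` noise-concentrated block at position `(u, v)`. -/
noncomputable def noiseBlock (mn u v : ℤ) : Finset (ℤ × ℤ) :=
  Finset.Ico u (u + mn) ×ˢ Finset.Ico v (v + mn)

/-- The number of votes that candidate `c` (`true` = A, `false` = B) receives in the region
with index `r` under voting `v`. -/
noncomputable def votesIn (L M mr : ℤ) (v : ℤ × ℤ → Bool) (r : ℤ × ℤ) (c : Bool) : ℕ :=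
  ((nation L M).filter (fun p => regionIdx mr p = r ∧ v p = c)).card

/-! Under `v` every region is won by A, and `v'` only changes cells inside the noise blocks, so A
still wins every region that meets no block. An `m_n × m_n` block meets at most
`(⌈m_n/m_r⌉ + 1)²` regions, hence at most `B_blk (⌈m_n/m_r⌉ + 1)²` regions can be lost, and the
noise bound says precisely that twice this number is below `N / m_r² ≤ K`. -/

open Finset

section Regions

variable {m : ℤ}

lemma card_image_fdiv_Ico_le (hm : 0 < m) (a n : ℤ) {C : ℕ} (hC : n ≤ C * m) :
    #((Ico a (a + n)).image (·.fdiv m)) ≤ C + 1 := by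
  have hsub : (Ico a (a + n)).image (·.fdiv m) ⊆ Icc (a / m) (a / m + C) := by
    intro k hk
    obtain ⟨x, hx, rfl⟩ := mem_image.mp hk
    rw [mem_Ico] at hx
    have ha := Int.lt_ediv_add_one_mul_self a hm
    rw [Int.fdiv_eq_ediv_of_nonneg _ hm.le, mem_Icc]
    refine ⟨Int.ediv_le_ediv hm hx.1, ?_⟩
    rw [← Int.lt_add_one_iff, Int.ediv_lt_iff_lt_mul hm]
    nlinarith
  have hcard := card_le_card hsub
  rwa [Int.card_Icc, show a / m + C + 1 - a / m = ((C + 1 : ℕ) : ℤ) by push_cast; ring,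
    Int.toNat_natCast] at hcard

lemma image_regionIdx_product (s t : Finset ℤ) :
    (s ×ˢ t).image (regionIdx m) = s.image (·.fdiv m) ×ˢ t.image (·.fdiv m) :=
  show (s ×ˢ t).image (Prod.map (·.fdiv m) (·.fdiv m)) = _ from prodMap_image_product _ _ s t

lemma card_image_regionIdx_noiseBlock_le (hm : 0 < m) (n u v : ℤ) {C : ℕ} (hC : n ≤ C * m) :
    #((noiseBlock n u v).image (regionIdx m)) ≤ (C + 1) ^ 2 := by
  rw [noiseBlock, image_regionIdx_product, card_product, sq]
  exact Nat.mul_le_mul (card_image_fdiv_Ico_le hm u n hC) (card_image_fdiv_Ico_le hm v n hC)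

lemma card_noiseBlock {n : ℤ} (hn : 0 ≤ n) (u v : ℤ) : (#(noiseBlock n u v) : ℤ) = n ^ 2 := by
  simp [noiseBlock, Int.card_Ico, hn, sq]

lemma card_nation {L M : ℤ} (hL : 0 ≤ L) (hM : 0 ≤ M) : (#(nation L M) : ℤ) = L * M := by
  simp [nation, Int.card_Ico, hL, hM]

lemma filter_regionIdx_eq_subset_noiseBlock (hm : 0 < m) (s : Finset (ℤ × ℤ)) (r : ℤ × ℤ) :
    {p ∈ s | regionIdx m p = r} ⊆ noiseBlock m (r.1 * m) (r.2 * m) := by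
  intro p hp
  obtain ⟨-, hpr⟩ := mem_filter.mp hp
  simp only [regionIdx, Prod.ext_iff, Int.fdiv_eq_ediv_of_nonneg _ hm.le] at hpr
  have h1 := Int.lt_ediv_add_one_mul_self p.1 hm
  have h2 := Int.lt_ediv_add_one_mul_self p.2 hm
  have h3 := Int.ediv_mul_le p.1 hm.ne'
  have h4 := Int.ediv_mul_le p.2 hm.ne'
  simp only [noiseBlock, mem_product, mem_Ico, ← hpr.1, ← hpr.2]
  constructor <;> constructor <;> linarith

lemma card_le_sq_mul_card_image_regionIdx (hm : 0 < m) (s : Finset (ℤ × ℤ)) :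
    (#s : ℤ) ≤ m ^ 2 * #(s.image (regionIdx m)) := by
  obtain ⟨k, rfl⟩ := Int.eq_ofNat_of_zero_le hm.le
  have := card_le_mul_card_image s (k ^ 2) fun r _ => by
    have := card_le_card (filter_regionIdx_eq_subset_noiseBlock hm s r)
    rw [← Nat.cast_le (α := ℤ), card_noiseBlock hm.le] at this
    exact_mod_cast this
  exact_mod_cast this

end Regions

lemma votesIn_eq_of_notMem_image_regionIdx {L M mr : ℤ} {v v' : ℤ × ℤ → Bool}
    {D : Finset (ℤ × ℤ)} (hdiff : ∀ p, v' p ≠ v p → p ∈ D) {r : ℤ × ℤ}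
    (hr : r ∉ D.image (regionIdx mr)) (c : Bool) :
    votesIn L M mr v' r c = votesIn L M mr v r c := by
  unfold votesIn
  congr 1
  refine filter_congr fun p _ => and_congr_right fun hpr => ?_
  by_contra hne
  exact hr (mem_image.mpr ⟨p, hdiff p fun h => hne (by rw [h]), hpr⟩)

lemma sdiff_image_regionIdx_subset_filter_votesIn_lt {L M mr : ℤ} {v v' : ℤ × ℤ → Bool}
    (hAwins : ∀ r ∈ (nation L M).image (regionIdx mr),
      votesIn L M mr v r false < votesIn L M mr v r true)
    {D : Finset (ℤ × ℤ)} (hdiff : ∀ p, v' p ≠ v p → p ∈ D) :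
    (nation L M).image (regionIdx mr) \ D.image (regionIdx mr) ⊆
      ((nation L M).image (regionIdx mr)).filter
        (fun r => votesIn L M mr v' r false < votesIn L M mr v' r true) := by
  intro r hr
  obtain ⟨hrI, hrD⟩ := mem_sdiff.mp hr
  rw [mem_filter, votesIn_eq_of_notMem_image_regionIdx hdiff hrD,
    votesIn_eq_of_notMem_image_regionIdx hdiff hrD]
  exact ⟨hrI, hAwins r hrI⟩

lemma card_lt_two_mul_card_of_sdiff_subset {α : Type*} [DecidableEq α] {I T W : Finset α}
    (hW : I \ T ⊆ W) (hT : 2 * #T < #I) : #I < 2 * #W := by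
  have := card_le_card_sdiff_add_card (s := I) (t := T)
  have := card_le_card hW
  omega

lemma two_mul_mul_sq_lt_of_noise_bound {B C : ℕ} {mr mn L M : ℤ} (hmr : 0 < mr) (hmn : 0 < mn)
    (h : (B : ℚ) * mn ^ 2 < ((mn : ℚ) ^ 2 / (mr : ℚ) ^ 2) * (1 / ((C : ℚ) + 1) ^ 2) *
      (((L : ℚ) * (M : ℚ)) / 2)) :
    2 * B * (C + 1) ^ 2 * mr ^ 2 < L * M := by
  have hmr' : (0 : ℚ) < mr := by exact_mod_cast hmr
  have hmn' : (0 : ℚ) < mn := by exact_mod_cast hmn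
  rw [show ((mn : ℚ) ^ 2 / (mr : ℚ) ^ 2) * (1 / ((C : ℚ) + 1) ^ 2) * (((L : ℚ) * (M : ℚ)) / 2) =
      mn ^ 2 * ((L * M) / (2 * (C + 1) ^ 2 * mr ^ 2)) by field_simp,
    mul_comm, mul_lt_mul_iff_right₀ (by positivity), lt_div_iff₀ (by positivity)] at h
  exact_mod_cast (show ((2 * B * (C + 1) ^ 2 * mr ^ 2 : ℤ) : ℚ) < (L * M : ℤ) by push_cast; linarith)

theorem regional_voting_retains_A_general (L M mr mn : ℤ)
    (hL : 0 < L) (hM : 0 < M) (hmr : 1 ≤ mr) (hmn : 1 ≤ mn)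
    (v v' : ℤ × ℤ → Bool)
    (hAwins : ∀ r ∈ (nation L M).image (regionIdx mr),
      votesIn L M mr v r false < votesIn L M mr v r true)
    (Bblk : ℕ) (pos : Fin Bblk → ℤ × ℤ)
    (hdiff : ∀ p, v' p ≠ v p →
      p ∈ Finset.univ.biUnion (fun i : Fin Bblk => noiseBlock mn (pos i).1 (pos i).2))
    (Sc : ℤ) (hSc : Sc = (Bblk : ℤ) * mn ^ 2)
    (hnoise : (Sc : ℚ) < ((mn : ℚ) ^ 2 / (mr : ℚ) ^ 2) *
      (1 / ((⌈(mn : ℚ) / (mr : ℚ)⌉ : ℚ) + 1) ^ 2) * (((L : ℚ) * (M : ℚ)) / 2)) :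
    ((nation L M).image (regionIdx mr)).card <
      2 * (((nation L M).image (regionIdx mr)).filter
        (fun r => votesIn L M mr v' r false < votesIn L M mr v' r true)).card := by
  have hmr0 : 0 < mr := by omega
  obtain ⟨C, hC⟩ := Int.eq_ofNat_of_zero_le (Int.ceil_nonneg (by positivity : (0 : ℚ) ≤ mn / mr))
  have hmnC : mn ≤ C * mr := by
    have := Int.le_ceil ((mn : ℚ) / mr)
    rw [hC, div_le_iff₀ (by positivity)] at this
    exact_mod_cast this
  set D := univ.biUnion fun i : Fin Bblk => noiseBlock mn (pos i).1 (pos i).2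
  set I := (nation L M).image (regionIdx mr)
  have hT : #(D.image (regionIdx mr)) ≤ Bblk * (C + 1) ^ 2 := by
    rw [biUnion_image]
    simpa using card_biUnion_le_card_mul univ _ _ fun i _ =>
      card_image_regionIdx_noiseBlock_le hmr0 mn (pos i).1 (pos i).2 hmnC
  rw [hSc, hC] at hnoise
  push_cast at hnoise
  have hTI : mr ^ 2 * (2 * #(D.image (regionIdx mr)) : ℤ) < mr ^ 2 * #I :=
    calc mr ^ 2 * (2 * #(D.image (regionIdx mr)) : ℤ) ≤ 2 * Bblk * (C + 1) ^ 2 * mr ^ 2 := by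
          nlinarith [sq_nonneg mr]
      _ < L * M := two_mul_mul_sq_lt_of_noise_bound hmr0 (by omega) hnoise
      _ ≤ mr ^ 2 * #I :=
          card_nation hL.le hM.le ▸ card_le_sq_mul_card_image_regionIdx hmr0 (nation L M)
  refine card_lt_two_mul_card_of_sdiff_subset
    (sdiff_image_regionIdx_subset_filter_votesIn_lt hAwins hdiff) ?_
  exact_mod_cast lt_of_mul_lt_mul_left hTI (sq_nonneg mr)

/-- Theorem 1, item 2: if A wins every region under `v`, and all the cells where `v'` differs
from `v` lie in a union of pairwise disjoint `m_n × m_n` noise-concentrated blocks of total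
size `S_c < (m_n²/m_r²) · (1/(⌈m_n/m_r⌉+1)²) · N/2`, then under `v'` candidate A still wins
strictly more than half of the `K` regions. -/
theorem regional_voting_retains_A (L M mr mn : ℤ)
    (hL : 0 < L) (hM : 0 < M) (hmr : 1 ≤ mr) (hmn : 1 ≤ mn)
    (hdL : mr ∣ L) (hdM : mr ∣ M)
    (v v' : ℤ × ℤ → Bool)
    (hAwins : ∀ r ∈ (nation L M).image (regionIdx mr),
      votesIn L M mr v r false < votesIn L M mr v r true)
    (Bblk : ℕ) (pos : Fin Bblk → ℤ × ℤ)
    (hdisj : ∀ i j : Fin Bblk, i ≠ j →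
      Disjoint (noiseBlock mn (pos i).1 (pos i).2) (noiseBlock mn (pos j).1 (pos j).2))
    (hsub : ∀ i : Fin Bblk, noiseBlock mn (pos i).1 (pos i).2 ⊆ nation L M)
    (hdiff : ∀ p, v' p ≠ v p →
      p ∈ Finset.univ.biUnion (fun i : Fin Bblk => noiseBlock mn (pos i).1 (pos i).2))
    (Sc : ℤ) (hSc : Sc = (Bblk : ℤ) * mn ^ 2)
    (hnoise : (Sc : ℚ) < ((mn : ℚ) ^ 2 / (mr : ℚ) ^ 2) *
      (1 / ((⌈(mn : ℚ) / (mr : ℚ)⌉ : ℚ) + 1) ^ 2) * (((L : ℚ) * (M : ℚ)) / 2)) :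
    ((nation L M).image (regionIdx mr)).card <
      2 * (((nation L M).image (regionIdx mr)).filter
        (fun r => votesIn L M mr v' r false < votesIn L M mr v' r true)).card :=
  regional_voting_retains_A_general L M mr mn hL hM hmr hmn v v' hAwins Bblk pos hdiff Sc hSc hnoise
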